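/- Let X be a T₁ topological space that is not countably compact, and suppose that no uncountable cardinal μ ≤ d(X) carries a nonprincipal μ-complete ultrafilter (i.e., d(X) is less than the first measurable cardinal). Then the product space X^{2^{d(X)}} is e-separable. -/

import Mathlib

open Cardinal Set

universe u

/-- A subset `D` of a topological space is closed discrete iff it is closed and
its subspace topology is discrete. -/
def ClosedDiscrete {X : Type u} [TopologicalSpace X] (D : Set X) : Prop :=
  IsClosed D ∧ DiscreteTopology D

/-- A space is `e`-separable iff it has a dense set which is a countable union of
closed discrete sets. -/
def ESeparable (X : Type u) [TopologicalSpace X] : Prop :=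
  ∃ D : ℕ → Set X, (∀ n, ClosedDiscrete (D n)) ∧ Dense (⋃ n, D n)

/-- The density of a space: the least cardinality of a dense subset. -/
noncomputable def density (X : Type u) [TopologicalSpace X] : Cardinal.{u} :=
  sInf {c | ∃ D : Set X, Dense D ∧ #D = c}

/-- The extent of a space: the supremum of the cardinalities of closed discrete subsets. -/
noncomputable def extent (X : Type u) [TopologicalSpace X] : Cardinal.{u} :=
  sSup {c | ∃ D : Set X, ClosedDiscrete D ∧ #D = c}

/-- A space is countably compact iff every countable open cover has a finite subcover. -/
def CountablyCompact (X : Type u) [TopologicalSpace X] : Prop :=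
  ∀ 𝒰 : Set (Set X), 𝒰.Countable → (∀ U ∈ 𝒰, IsOpen U) → ⋃₀ 𝒰 = Set.univ →
    ∃ 𝒱 ⊆ 𝒰, 𝒱.Finite ∧ ⋃₀ 𝒱 = Set.univ

/-!
Fix a dense `S ⊆ X` with `#S = d(X)` and an injective sequence `y` in `X` with closed discrete
range, which exists because `X` is not countably compact. By Hewitt–Marczewski–Pondiczery,
`X^I` with `#I = 2^d` has a dense family `H t`, `t ∈ T`, `#T ≤ d`. Split `I ≃ I × ℕ`; as
`#(T → ℕ) ≤ 2^d`, each `p : T → ℕ` and each level `n` get their own coordinate of level `n + 1`,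
and `G n t` is `H t` on the coordinates of level `≤ n` and `y (p t)` on the coordinate of `p`.
Then `G n t → H t`, so `⋃ₙ range (G n)` is dense. An accumulation point `g` of `range (G n)`
would give an ultrafilter on `T`, refining `comap (G n) (𝓝[≠] g)`, on which every `p : T → ℕ`
is almost constant (read off `g` at the coordinate of `p`). It is not principal, as `pure t`
would force `g = G n t`, and Ulam's argument turns it into a nonprincipal `μ`-complete
ultrafilter on an uncountable `μ ≤ #T ≤ d`.
-/

open Filter Topology Function

section ClosedDiscrete

variable {X : Type u} [TopologicalSpace X]

theorem closedDiscrete_iff_disjoint_nhdsNE {D : Set X} :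
    ClosedDiscrete D ↔ ∀ x, Disjoint (𝓝[≠] x) (𝓟 D) := by
  rw [ClosedDiscrete, ← isDiscrete_iff_discreteTopology]
  exact isClosed_and_discrete_iff

theorem ClosedDiscrete.mono {D E : Set X} (hD : ClosedDiscrete D) (hED : E ⊆ D) :
    ClosedDiscrete E := by
  rw [closedDiscrete_iff_disjoint_nhdsNE] at hD ⊢
  exact fun x => (hD x).mono_right (principal_mono.2 hED)

theorem ClosedDiscrete.eventually_eq_of_mem {D : Set X} (hD : ClosedDiscrete D) (x : X) :
    ∀ᶠ z in 𝓝 x, z ∈ D → z = x := by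
  have hDc := disjoint_principal_right.1 (closedDiscrete_iff_disjoint_nhdsNE.1 hD x)
  filter_upwards [mem_nhdsWithin_iff_eventually.1 hDc] with z hz hzD
  by_contra hzx
  exact hz hzx hzD

theorem countablyCompact_of_isCountablyCompact_univ (h : IsCountablyCompact (univ : Set X)) :
    CountablyCompact X := by
  intro 𝒰 h𝒰 hopen hcover
  obtain ⟨𝒱, h𝒱𝒰, h𝒱, hsub⟩ := h.elim_finite_subcover_image (U := id) h𝒰 hopen
    (by simp only [id]; rw [← sUnion_eq_biUnion, hcover])
  exact ⟨𝒱, h𝒱𝒰, h𝒱, univ_subset_iff.1 (by rwa [sUnion_eq_biUnion])⟩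

theorem exists_injective_closedDiscrete_range_of_not_countablyCompact [T1Space X]
    (h : ¬ CountablyCompact X) : ∃ y : ℕ → X, Injective y ∧ ClosedDiscrete (range y) := by
  have h' := mt countablyCompact_of_isCountablyCompact_univ h
  simp only [isCountablyCompact_iff_infinite_subset_has_accPt, subset_univ, mem_univ,
    true_and, true_imp_iff, not_forall, not_exists] at h'
  obtain ⟨D, hDinf, hacc⟩ := h'
  have hD : ClosedDiscrete D := closedDiscrete_iff_disjoint_nhdsNE.2 fun x =>
    disjoint_iff.2 (not_neBot.1 (hacc x))
  exact ⟨fun n => hDinf.natEmbedding _ n,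
    Subtype.val_injective.comp (hDinf.natEmbedding _).injective,
    hD.mono (range_subset_iff.2 fun n => Subtype.prop _)⟩

theorem exists_dense_mk_eq_density (X : Type u) [TopologicalSpace X] :
    ∃ S : Set X, Dense S ∧ #S = density X :=
  csInf_mem (⟨_, Set.univ, dense_univ, rfl⟩ :
    Set.Nonempty {c : Cardinal.{u} | ∃ D : Set X, Dense D ∧ #D = c})

theorem Dense.infinite [T1Space X] [Infinite X] {S : Set X} (hS : Dense S) : S.Infinite := by
  intro hfin
  have hS_univ : S = Set.univ := by rw [← hfin.isClosed.closure_eq, hS.closure_eq]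
  exact infinite_univ (hS_univ ▸ hfin)

end ClosedDiscrete

namespace Ultrafilter

variable {T : Type u}

theorem eq_pure_iff_singleton_mem {α : Type*} {U : Ultrafilter α} {a : α} :
    U = pure a ↔ {a} ∈ U := by
  rw [← coe_inj, coe_pure]
  exact U.neBot.eq_pure_iff

theorem aleph0_lt_mk_of_forall_preimage_singleton_notMem {U : Ultrafilter T}
    (hU : ∀ p : T → ℕ, ∃ n, p ⁻¹' {n} ∈ U) {ι : Type u} {f : T → ι}
    (hf : ∀ i, f ⁻¹' {i} ∉ U) : ℵ₀ < #ι := by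
  by_contra! hι
  have : Countable ι := mk_le_aleph0_iff.1 hι
  obtain ⟨e, he⟩ := exists_injective_nat ι
  obtain ⟨n, hn⟩ := hU (e ∘ f)
  obtain ⟨t, ht⟩ := U.nonempty_of_mem hn
  have hfib : (e ∘ f) ⁻¹' {n} = f ⁻¹' {f t} := by
    ext t'
    simp only [mem_preimage, mem_singleton_iff, comp_apply] at ht ⊢
    rw [← ht, he.eq_iff]
  exact hf (f t) (hfib ▸ hn)

theorem iInter_mem_map_of_minimal {U : Ultrafilter T} {ι : Type u} {f : T → ι}
    (hι : ℵ₀ ≤ #ι) (hmin : ∀ (κ : Type u) (g : T → κ), (∀ k, g ⁻¹' {k} ∉ U) → #ι ≤ #κ)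
    (κ : Type u) (s : κ → Set ι) (hκ : #κ < #ι) (hs : ∀ k, s k ∈ U.map f) :
    ⋂ k, s k ∈ U.map f := by
  classical
  by_contra hnot
  let g : T → Option κ := fun t => if h : ∃ k, f t ∉ s k then some h.choose else none
  have hg : ∀ o, g ⁻¹' {o} ∉ U := by
    rintro (_ | k) hk
    · refine hnot (mem_map.2 (mem_of_superset hk fun t ht => ?_))
      simp only [mem_preimage, mem_singleton_iff, g, dite_eq_right_iff, reduceCtorEq] at ht
      simpa using ht
    · refine U.compl_notMem_iff.2 (hs k) (mem_of_superset hk fun t ht => ?_)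
      simp only [mem_preimage, mem_singleton_iff, g] at ht
      split_ifs at ht with h
      exact (Option.some_injective _ ht) ▸ h.choose_spec
  have hle := hmin _ g hg
  rw [mk_option] at hle
  exact hle.not_gt (add_lt_of_lt hι hκ (one_lt_aleph0.trans_le hι))

theorem exists_uncountable_complete_of_forall_preimage_singleton_mem (U : Ultrafilter T)
    (hnp : ∀ t, U ≠ pure t) (hU : ∀ p : T → ℕ, ∃ n, p ⁻¹' {n} ∈ U) :
    ∃ μ : Cardinal.{u}, ℵ₀ < μ ∧ μ ≤ #T ∧ ∃ V : Ultrafilter μ.out, (∀ x, V ≠ pure x) ∧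
      ∀ (ι : Type u) (s : ι → Set μ.out), #ι < μ → (∀ i, s i ∈ V) → ⋂ i, s i ∈ V := by
  -- `sInf P` is the least number of `U`-null pieces into which `T` can be partitioned.
  set P : Set Cardinal.{u} := {c | ∃ (ι : Type u) (f : T → ι), #ι = c ∧ ∀ i, f ⁻¹' {i} ∉ U}
  have hTP : #T ∈ P := ⟨T, id, rfl, fun t ht => hnp t (eq_pure_iff_singleton_mem.2 ht)⟩
  obtain ⟨ι, f, hι, hf⟩ : sInf P ∈ P := csInf_mem ⟨_, hTP⟩
  let f' : T → (#ι).out := outMkEquiv.symm ∘ f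
  have hf' : ∀ x, f' ⁻¹' {x} ∉ U := fun x => by
    convert hf (outMkEquiv x) using 3
    ext t
    simp [f', Equiv.symm_apply_eq]
  have hP : ∀ (κ : Type u) (g : T → κ), (∀ k, g ⁻¹' {k} ∉ U) → #(#ι).out ≤ #κ :=
    fun κ g hg => by rw [mk_out, hι]; exact csInf_le' ⟨κ, g, rfl, hg⟩
  have hω : ℵ₀ < #ι := aleph0_lt_mk_of_forall_preimage_singleton_notMem hU hf
  refine ⟨#ι, hω, hι ▸ csInf_le' hTP,
    U.map f', fun x hx => hf' x (eq_pure_iff_singleton_mem.1 hx), fun κ s hκ hs => ?_⟩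
  exact iInter_mem_map_of_minimal (by rw [mk_out]; exact hω.le) hP κ s (by rwa [mk_out]) hs

end Ultrafilter

section ClosedDiscreteRange

variable {X : Type u} [TopologicalSpace X] {T K : Type*} {y : ℕ → X} {G : T → K → X}
  {c : (T → ℕ) → K}

theorem exists_preimage_singleton_mem_of_le_comap_nhds (hy : Injective y)
    (hyD : ClosedDiscrete (range y)) (hG : ∀ t p, G t (c p) = y (p t)) {g : K → X}
    {U : Ultrafilter T} (hU : ↑U ≤ comap G (𝓝 g)) (p : T → ℕ) : ∃ n, p ⁻¹' {n} ∈ U := by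
  have hev : ∀ᶠ h in 𝓝 g, h (c p) ∈ range y → h (c p) = g (c p) :=
    (continuous_apply (c p)).continuousAt.eventually (hyD.eventually_eq_of_mem (g (c p)))
  have hmem : {t | y (p t) = g (c p)} ∈ U :=
    hU (mem_of_superset (preimage_mem_comap hev) fun t ht => by
      simpa only [mem_preimage, mem_ofPred_eq, hG, mem_range_self, forall_const] using ht)
  obtain ⟨t₀, ht₀⟩ := U.nonempty_of_mem hmem
  refine ⟨p t₀, mem_of_superset hmem fun t ht => ?_⟩
  exact hy (ht.trans ht₀.symm)

theorem closedDiscrete_range_of_coding [T1Space X] (hy : Injective y)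
    (hyD : ClosedDiscrete (range y)) (hG : ∀ t p, G t (c p) = y (p t))
    (hT : ∀ U : Ultrafilter T, (∀ p : T → ℕ, ∃ n, p ⁻¹' {n} ∈ U) → ∃ t, U = pure t) :
    ClosedDiscrete (range G) := by
  refine closedDiscrete_iff_disjoint_nhdsNE.2 fun g => ?_
  rw [disjoint_principal_right, ← comap_eq_bot_iff_compl_range, ← not_neBot]
  intro hne
  have hU : ↑(Ultrafilter.of (comap G (𝓝[≠] g))) ≤ comap G (𝓝[≠] g) := Ultrafilter.of_le _
  have hU' := hU.trans (comap_mono nhdsWithin_le_nhds)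
  obtain ⟨t, hUt⟩ := hT _ (exists_preimage_singleton_mem_of_le_comap_nhds hy hyD hG hU')
  rw [hUt, Ultrafilter.coe_pure] at hU hU'
  have hGt : G t ≠ g := hU (preimage_mem_comap self_mem_nhdsWithin)
  exact hGt (pure_le_nhds_iff.1 (by simpa using map_le_iff_le_comap.2 hU'))

end ClosedDiscreteRange

section Density

variable {X : Type*} [TopologicalSpace X]

theorem dense_iUnion_range_of_tendsto {Y T : Type*} [TopologicalSpace Y] {H : T → Y}
    {G : ℕ → T → Y} (hH : DenseRange H) (hG : ∀ t, Tendsto (fun n => G n t) atTop (𝓝 (H t))) :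
    Dense (⋃ n, range (G n)) := by
  refine dense_closure.1 (hH.mono ?_)
  rintro _ ⟨t, rfl⟩
  exact mem_closure_of_tendsto (hG t) (Eventually.of_forall fun n => mem_iUnion.2 ⟨n, t, rfl⟩)

theorem dense_of_forall_finset_exists_eqOn {J : Type*} {S : Set X} (hS : Dense S) {P : Set (J → X)}
    (hP : ∀ (F : Finset J) (f : J → X), (∀ j ∈ F, f j ∈ S) → ∃ p ∈ P, ∀ j ∈ F, p j = f j) :
    Dense P := by
  rw [dense_iff_inter_open]
  rintro W hW ⟨g, hg⟩
  obtain ⟨F, u, hu, huW⟩ := isOpen_pi_iff.1 hW g hg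
  have hpt : ∀ j, ∃ x, j ∈ F → x ∈ u j ∩ S := fun j => by
    by_cases hj : j ∈ F
    · obtain ⟨x, hx⟩ := hS.inter_open_nonempty _ (hu j hj).1 ⟨g j, (hu j hj).2⟩
      exact ⟨x, fun _ => hx⟩
    · exact ⟨g j, fun h => absurd h hj⟩
  choose f hf using hpt
  obtain ⟨p, hpP, hpf⟩ := hP F f fun j hj => (hf j hj).2
  exact ⟨p, huW fun j hj => hpf j hj ▸ (hf j hj).1, hpP⟩

theorem exists_finset_injOn_restrict {J α β : Type*} {e : J → α → β} (he : Injective e)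
    (F : Finset J) : ∃ E : Finset α, InjOn (fun j (a : E) => e j a) F := by
  classical
  have hsep : ∀ j j' : J, ∃ E : Finset α, e j = e j' ∨ ∃ a ∈ E, e j a ≠ e j' a := by
    intro j j'
    by_cases h : e j = e j'
    · exact ⟨∅, Or.inl h⟩
    · obtain ⟨a, ha⟩ := Function.ne_iff.1 h
      exact ⟨{a}, Or.inr ⟨a, Finset.mem_singleton_self a, ha⟩⟩
  choose w hw using hsep
  refine ⟨F.biUnion fun j => F.biUnion (w j), fun j hj j' hj' hjj' => he ?_⟩
  rcases hw j j' with h | ⟨a, ha, hne⟩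
  · exact h
  · have haE : a ∈ F.biUnion fun j => F.biUnion (w j) :=
      Finset.mem_biUnion.2 ⟨j, hj, Finset.mem_biUnion.2 ⟨j', hj', ha⟩⟩
    exact absurd (congrFun hjj' ⟨a, haE⟩) hne

theorem mk_sigma_finset_bool_arrow_le (α : Type u) [Infinite α] :
    #(Σ E : Finset α, (E → Bool) → α) ≤ #α := by
  classical
  rw [mk_sigma]
  calc sum (fun E : Finset α => #((E → Bool) → α)) ≤ sum fun _ : Finset α => #α :=
        sum_le_sum _ _ fun E => by
          rw [← power_def, mk_fintype (E → Bool), power_natCast]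
          exact power_nat_le (aleph0_le_mk α)
    _ = #α := by rw [sum_const', mk_finset_of_infinite, mul_eq_self (aleph0_le_mk α)]

theorem exists_denseRange_pi_of_mk_le {X : Type u} [TopologicalSpace X] {S : Set X}
    (hS : Dense S) (hSinf : S.Infinite) {J : Type u} (hJ : #J ≤ 2 ^ #S) :
    ∃ (T : Type u) (H : T → J → X), #T ≤ #S ∧ DenseRange H := by
  have : Infinite S := hSinf.to_subtype
  obtain ⟨e⟩ : Nonempty (J ↪ (S → Bool)) := by
    rw [← Cardinal.le_def]
    simpa using hJ
  refine ⟨Σ E : Finset S, (E → Bool) → S, fun v j => v.2 fun a => e j a,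
    mk_sigma_finset_bool_arrow_le S, dense_of_forall_finset_exists_eqOn hS fun F f hf => ?_⟩
  obtain ⟨E, hE⟩ := exists_finset_injOn_restrict e.injective F
  have hr : Injective fun (j : F) (a : E) => e j a := injOn_iff_injective.1 hE
  refine ⟨_, ⟨⟨E, extend _ (fun j : F => ⟨f j, hf j j.2⟩) fun _ => Classical.arbitrary S⟩, rfl⟩,
    fun j hj => congrArg Subtype.val (hr.extend_apply _ _ ⟨j, hj⟩)⟩

end Density

theorem mk_arrow_nat_le_two_power {T : Type u} {κ : Cardinal.{u}} (hκ : ℵ₀ ≤ κ) (hT : #T ≤ κ) :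
    #(T → ℕ) ≤ 2 ^ κ := by
  calc #(T → ℕ) = ℵ₀ ^ #T := by simp
    _ ≤ κ ^ κ :=
      (power_le_power_right hκ).trans (power_le_power_left (aleph0_pos.trans_le hκ).ne' hT)
    _ = 2 ^ κ := power_self_eq hκ

theorem eSeparable_pi_of_denseRange {X I T : Type u} [TopologicalSpace X] [T1Space X]
    {y : ℕ → X} (hy : Injective y) (hyD : ClosedDiscrete (range y)) {H : T → I → X}
    (hH : DenseRange H) (e : I ≃ I × ℕ) (σ : (T → ℕ) ↪ I)
    (hT : ∀ U : Ultrafilter T, (∀ p : T → ℕ, ∃ n, p ⁻¹' {n} ∈ U) → ∃ t, U = pure t) :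
    ESeparable (I → X) := by
  let G : ℕ → T → I → X := fun n t i =>
    if (e i).2 ≤ n then H t i else y (invFun σ (e i).1 t)
  refine ⟨fun n => range (G n), fun n => ?_, ?_⟩
  · refine closedDiscrete_range_of_coding hy hyD (c := fun p => e.symm (σ p, n + 1))
      (fun t p => ?_) hT
    simp [G, leftInverse_invFun σ.injective p]
  · refine dense_iUnion_range_of_tendsto hH fun t => tendsto_pi_nhds.2 fun i =>
      tendsto_const_nhds.congr' (eventually_atTop.2 ⟨(e i).2, fun n hn => ?_⟩)
    simp [G, hn]

/-- If `X` is not countably compact and no uncountable `μ ≤ d(X)` carries a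
nonprincipal `μ`-complete ultrafilter (i.e. `d(X)` is below the first measurable
cardinal), then `X^{2^{d(X)}}` is `e`-separable. -/
theorem eSeparable_pow_two_pow_density_of_no_measurable {X : Type u} [TopologicalSpace X]
    [T1Space X] (hncc : ¬ CountablyCompact X)
    (hnm : ∀ μ : Cardinal.{u}, μ ≤ density X → ℵ₀ < μ →
      ¬ ∃ 𝒰 : Ultrafilter μ.out, (∀ x : μ.out, 𝒰 ≠ pure x) ∧
        ∀ (ι : Type u) (s : ι → Set μ.out), #ι < μ → (∀ i, s i ∈ 𝒰) → ⋂ i, s i ∈ 𝒰) :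
    ESeparable (((2 : Cardinal.{u}) ^ density X).out → X) := by
  obtain ⟨y, hy, hyD⟩ := exists_injective_closedDiscrete_range_of_not_countablyCompact hncc
  have : Infinite X := .of_injective y hy
  obtain ⟨S, hS, hSd⟩ := exists_dense_mk_eq_density X
  have hSinf : S.Infinite := hS.infinite
  have hd : ℵ₀ ≤ density X := hSd ▸ aleph0_le_mk_iff.2 hSinf.to_subtype
  set I := ((2 : Cardinal.{u}) ^ density X).out
  have hI : ℵ₀ ≤ #I := by rw [mk_out]; exact hd.trans (cantor _).le
  obtain ⟨T, H, hT, hH⟩ := exists_denseRange_pi_of_mk_le hS hSinf (J := I) (by rw [mk_out, hSd])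
  have hTd : #T ≤ density X := hT.trans hSd.le
  obtain ⟨σ⟩ : Nonempty ((T → ℕ) ↪ I) := by
    rw [← Cardinal.le_def, mk_out]; exact mk_arrow_nat_le_two_power hd hTd
  obtain ⟨e⟩ : Nonempty (I ≃ I × ℕ) := Cardinal.eq.1 (by simp [mul_aleph0_eq hI])
  refine eSeparable_pi_of_denseRange hy hyD hH e σ fun U hU => ?_
  by_contra! hnp
  obtain ⟨μ, hμ, hμT, hV⟩ := U.exists_uncountable_complete_of_forall_preimage_singleton_mem hnp hU
  exact hnm μ (hμT.trans hTd) hμ hV
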